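/- Let β = (β₀,β₁,β₂,β₃) ∈ ℂ⁴ and let λ, t ∈ ℂ with λ ≠ 0 and t ≠ 0. Then λ⁶·t³·N_{(β₁,β₀,β₂,β₃)}(1/λ, 1/t) = −N_{(β₀,β₁,β₂,β₃)}(λ, t). In particular, (λ,t) lies on the curve N_{(β₀,β₁,β₂,β₃)} = 0 if and only if (1/λ, 1/t) lies on the curve N_{(β₁,β₀,β₂,β₃)} = 0 (this is the action of the symmetry x² : s ↦ 1/s of the Painlevé VI equation on the curves Γ_β). -/

import Mathlib

/-! Under `(λ, t) ↦ (1/λ, 1/t)` each of the four terms of `N` gets multiplied by `±λ⁻⁶t⁻³`: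
the `β₀`- and `β₁`-terms trade places and the `β₂`- and `β₃`-terms change sign. Clearing
denominators gives the identity, and since `λ⁶t³ ≠ 0` the two curves correspond. -/

/-- The value `N_β(λ,t)` of the defining polynomial of the curve `Γ_β`. -/
def Nval (β : Fin 4 → ℂ) (l t : ℂ) : ℂ :=
  β 0 * l ^ 2 * (l - 1) ^ 2 * (l - t) ^ 2
    - β 1 * t * (l - 1) ^ 2 * (l - t) ^ 2
    + β 2 * (t - 1) * l ^ 2 * (l - t) ^ 2
    - β 3 * t * (t - 1) * l ^ 2 * (l - 1) ^ 2

theorem pow_mul_Nval_swap_inv (β : Fin 4 → ℂ) {l t : ℂ} (hl : l ≠ 0) (ht : t ≠ 0) :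
    l ^ 6 * t ^ 3 * Nval ![β 1, β 0, β 2, β 3] (1 / l) (1 / t) = -Nval β l t := by
  simp only [Nval, Matrix.cons_val_zero, Matrix.cons_val_one, Matrix.cons_val_two,
    Matrix.cons_val_three, Matrix.head_cons, Matrix.tail_cons]
  field_simp
  ring

theorem stmt18 (β : Fin 4 → ℂ) (l t : ℂ) (hl : l ≠ 0) (ht : t ≠ 0) :
    l ^ 6 * t ^ 3 * Nval ![β 1, β 0, β 2, β 3] (1 / l) (1 / t) = -Nval β l t ∧
    (Nval β l t = 0 ↔ Nval ![β 1, β 0, β 2, β 3] (1 / l) (1 / t) = 0) := by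
  have key := pow_mul_Nval_swap_inv β hl ht
  refine ⟨key, ?_⟩
  rw [← neg_eq_zero, ← key]
  simp [hl, ht]
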